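/- arXiv:2307.01046 — 2 statements merged into one kernel-verified Lean document; each statement's English description precedes it below -/
import Mathlib

section
/- Let π be a partition of a finite linearly ordered set X such that exactly one pair of blocks of π crosses, say the blocks A and B cross each other, and every other pair of blocks of π is non-crossing. Let ρ be a non-crossing partition of A ∪ B (with the order inherited from X). Then the partition of X whose blocks are the blocks of ρ together with the blocks of π other than A and B is non-crossing. -/
/-!
A block `S` crosses a block `T` exactly when `S` straddles some pair `c < d` of elements of `T`:
it meets `(c, d)` and also lies partly outside `[c, d]`. A block `T` of `π` other than `A`, `B`
is disjoint from `A ∪ B`, so a non-straddling `A` lies inside `(c, d)` or avoids it, and likewise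
`B`. Since `A` and `B` cross, each has an element between two elements of the other, so one
cannot lie inside `(c, d)` while the other avoids it. Hence if a block of `ρ`, and so `A ∪ B`,
straddles `(c, d)`, then `A` or `B` crosses `T`, which `π` forbids.
-/

def IsPartitionOn {α : Type*} (Y : Set α) (P : Set (Set α)) : Prop :=
  (∀ S ∈ P, S.Nonempty) ∧ (∀ S ∈ P, ∀ T ∈ P, S ≠ T → Disjoint S T) ∧ ⋃₀ P = Y

def Crosses {α : Type*} (lt : α → α → Prop) (A B : Set α) : Prop :=
  ∃ a1 ∈ A, ∃ a2 ∈ A, ∃ b1 ∈ B, ∃ b2 ∈ B,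
    (lt a1 b1 ∧ lt b1 a2 ∧ lt a2 b2) ∨ (lt b1 a1 ∧ lt a1 b2 ∧ lt b2 a2)

def NonCrossingFam {α : Type*} (lt : α → α → Prop) (P : Set (Set α)) : Prop :=
  ∀ A ∈ P, ∀ B ∈ P, A ≠ B → ¬ Crosses lt A B

open Set

theorem Crosses.symm {α : Type*} {lt : α → α → Prop} {A B : Set α}
    (h : Crosses lt A B) : Crosses lt B A := by
  obtain ⟨a1, ha1, a2, ha2, b1, hb1, b2, hb2, hc⟩ := h
  exact ⟨b1, hb1, b2, hb2, a1, ha1, a2, ha2, hc.symm⟩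

section LinearOrder

variable {α : Type*} [LinearOrder α]

def Straddles (S : Set α) (c d : α) : Prop :=
  (S ∩ Ioo c d).Nonempty ∧ (S \ Icc c d).Nonempty

theorem Straddles.mono {S S' : Set α} {c d : α} (h : Straddles S c d) (hS : S ⊆ S') :
    Straddles S' c d :=
  ⟨h.1.mono (inter_subset_inter_left _ hS), h.2.mono (sdiff_subset_sdiff_left hS)⟩

theorem crosses_iff_exists_straddles {S T : Set α} :
    Crosses (· < ·) S T ↔ ∃ c ∈ T, ∃ d ∈ T, Straddles S c d := by
  constructor
  · rintro ⟨s1, hs1, s2, hs2, t1, ht1, t2, ht2, ⟨h1, h2, h3⟩ | ⟨h1, h2, h3⟩⟩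
    · exact ⟨t1, ht1, t2, ht2, ⟨s2, hs2, h2, h3⟩, s1, hs1, fun h => h1.not_ge h.1⟩
    · exact ⟨t1, ht1, t2, ht2, ⟨s1, hs1, h1, h2⟩, s2, hs2, fun h => h3.not_ge h.2⟩
  · rintro ⟨c, hc, d, hd, ⟨u, hu, hcu, hud⟩, v, hv, hvcd⟩
    rcases lt_or_ge v c with hvc | hcv
    · exact ⟨v, hv, u, hu, c, hc, d, hd, Or.inl ⟨hvc, hcu, hud⟩⟩
    · have hdv : d < v := not_le.mp fun hvd => hvcd ⟨hcv, hvd⟩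
      exact ⟨u, hu, v, hv, c, hc, d, hd, Or.inr ⟨hcu, hud, hdv⟩⟩

theorem subset_Ioo_or_inter_Ioo_eq_empty_of_not_straddles {S : Set α} {c d : α}
    (hc : c ∉ S) (hd : d ∉ S) (h : ¬ Straddles S c d) :
    S ⊆ Ioo c d ∨ S ∩ Ioo c d = ∅ := by
  refine (eq_empty_or_nonempty _).symm.imp (fun hin => ?_) id
  have hSIcc : S ⊆ Icc c d := sdiff_eq_empty.mp (not_nonempty_iff_eq_empty.mp (h ⟨hin, ·⟩))
  rw [← Icc_sdiff_both]
  exact fun x hx => ⟨hSIcc hx, by rintro (rfl | rfl) <;> contradiction⟩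

/-- If `A` and `B` cross, some element of `B` lies between two elements of `A`. -/
theorem Crosses.inter_nonempty_of_subset {A B I : Set α} [I.OrdConnected]
    (h : Crosses (· < ·) A B) (hA : A ⊆ I) : (B ∩ I).Nonempty := by
  obtain ⟨a1, ha1, a2, ha2, b1, hb1, b2, hb2, ⟨h1, h2, -⟩ | ⟨-, h2, h3⟩⟩ := h
  · exact ⟨b1, hb1, Set.OrdConnected.out ‹_› (hA ha1) (hA ha2) ⟨h1.le, h2.le⟩⟩
  · exact ⟨b2, hb2, Set.OrdConnected.out ‹_› (hA ha1) (hA ha2) ⟨h2.le, h3.le⟩⟩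

theorem Crosses.straddles_or_straddles {A B : Set α} (hAB : Crosses (· < ·) A B) {c d : α}
    (hc : c ∉ A ∪ B) (hd : d ∉ A ∪ B) (h : Straddles (A ∪ B) c d) :
    Straddles A c d ∨ Straddles B c d := by
  by_contra! hnot
  obtain ⟨hcA, hcB⟩ := not_or.mp hc
  obtain ⟨hdA, hdB⟩ := not_or.mp hd
  have hA := subset_Ioo_or_inter_Ioo_eq_empty_of_not_straddles hcA hdA hnot.1
  have hB := subset_Ioo_or_inter_Ioo_eq_empty_of_not_straddles hcB hdB hnot.2
  have inside_of_inside : ∀ {X Y : Set α}, Crosses (· < ·) X Y →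
      (Y ⊆ Ioo c d ∨ Y ∩ Ioo c d = ∅) → X ⊆ Ioo c d → Y ⊆ Ioo c d := by
    intro X Y hXY hY hX
    exact hY.resolve_right (hXY.inter_nonempty_of_subset hX).ne_empty
  by_cases hin : A ⊆ Ioo c d ∨ B ⊆ Ioo c d
  · have hAB' : A ∪ B ⊆ Ioo c d := by
      rcases hin with hA' | hB'
      · exact union_subset hA' (inside_of_inside hAB hB hA')
      · exact union_subset (inside_of_inside hAB.symm hA hB') hB'
    obtain ⟨x, hx, hxIcc⟩ := h.2
    exact hxIcc (Ioo_subset_Icc_self (hAB' hx))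
  · rw [not_or] at hin
    have hempty : (A ∪ B) ∩ Ioo c d = ∅ := by
      rw [union_inter_distrib_right, hA.resolve_left hin.1, hB.resolve_left hin.2, union_empty]
    exact h.1.ne_empty hempty

theorem Crosses.crosses_or_crosses_of_subset_union {A B S T : Set α}
    (hAB : Crosses (· < ·) A B) (hT : Disjoint T (A ∪ B)) (hS : S ⊆ A ∪ B)
    (h : Crosses (· < ·) S T) : Crosses (· < ·) A T ∨ Crosses (· < ·) B T := by
  obtain ⟨c, hc, d, hd, hstr⟩ := crosses_iff_exists_straddles.mp h
  simp only [crosses_iff_exists_straddles]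
  exact (hAB.straddles_or_straddles (hT.notMem_of_mem_left hc) (hT.notMem_of_mem_left hd)
    (hstr.mono hS)).imp (⟨c, hc, d, hd, ·⟩) (⟨c, hc, d, hd, ·⟩)

end LinearOrder

theorem uncross_nonCrossing_general {α : Type*} [LinearOrder α]
    (π : Set (Set α)) (hπ : IsPartitionOn Set.univ π)
    (A B : Set α) (hA : A ∈ π) (hB : B ∈ π)
    (hcross : Crosses (· < ·) A B)
    (honly : ∀ C ∈ π, ∀ D ∈ π, Crosses (· < ·) C D →
      (C = A ∧ D = B) ∨ (C = B ∧ D = A))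
    (ρ : Set (Set α)) (hρ : IsPartitionOn (A ∪ B) ρ)
    (hρnc : NonCrossingFam (· < ·) ρ) :
    NonCrossingFam (· < ·) (ρ ∪ (π \ {A, B})) := by
  have hold : ∀ T ∈ π \ {A, B}, ∀ C ∈ ({A, B} : Set (Set α)), ¬ Crosses (· < ·) C T := by
    rintro T ⟨hTπ, hTAB⟩ C (rfl | rfl) h
    · rcases honly _ hA T hTπ h with ⟨-, rfl⟩ | ⟨-, rfl⟩ <;> simp at hTAB
    · rcases honly _ hB T hTπ h with ⟨-, rfl⟩ | ⟨-, rfl⟩ <;> simp at hTAB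
  have hmixed : ∀ S ∈ ρ, ∀ T ∈ π \ {A, B}, ¬ Crosses (· < ·) S T := by
    intro S hS T hT h
    have hdisj : Disjoint T (A ∪ B) := disjoint_union_right.mpr
      ⟨hπ.2.1 T hT.1 A hA (by rintro rfl; simp at hT),
        hπ.2.1 T hT.1 B hB (by rintro rfl; simp at hT)⟩
    have hsub : S ⊆ A ∪ B := hρ.2.2 ▸ subset_sUnion_of_mem hS
    rcases hcross.crosses_or_crosses_of_subset_union hdisj hsub h with h' | h'
    exacts [hold T hT A (by simp) h', hold T hT B (by simp) h']
  rintro S (hS | hS) T (hT | hT) hST h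
  · exact hρnc S hS T hT hST h
  · exact hmixed S hS T hT h
  · exact hmixed T hT S hS h.symm
  · rcases honly S hS.1 T hT.1 h with ⟨rfl, -⟩ | ⟨rfl, -⟩ <;> simp at hS

/-- Let `π` be a partition of a finite linearly ordered set `X` such that exactly
one pair of blocks of `π` crosses, namely `A` and `B`, all other pairs being
non-crossing. Let `ρ` be a non-crossing partition of `A ∪ B` (with the order
inherited from `X`). Then the partition whose blocks are the blocks of `ρ`
together with the blocks of `π` other than `A` and `B` is non-crossing. -/
theorem uncross_nonCrossing {α : Type*} [Fintype α] [LinearOrder α]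
    (π : Set (Set α)) (hπ : IsPartitionOn Set.univ π)
    (A B : Set α) (hA : A ∈ π) (hB : B ∈ π) (hAB : A ≠ B)
    (hcross : Crosses (· < ·) A B)
    (honly : ∀ C ∈ π, ∀ D ∈ π, Crosses (· < ·) C D →
      (C = A ∧ D = B) ∨ (C = B ∧ D = A))
    (ρ : Set (Set α)) (hρ : IsPartitionOn (A ∪ B) ρ)
    (hρnc : NonCrossingFam (· < ·) ρ) :
    NonCrossingFam (· < ·) (ρ ∪ (π \ {A, B})) :=
  uncross_nonCrossing_general π hπ A B hA hB hcross honly ρ hρ hρnc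
end

section
/- Let π be a partition of Fin n and let W ⊆ Fin n be a union of blocks of π; write π_W for the set of blocks of π contained in W and π_{W^c} for the set of blocks of π contained in the complement of W. Suppose R is a finite set of partitions of W and (a_ρ)_{ρ∈R} are rationals such that F_W[π_W, χ'] = Σ_{ρ∈R} a_ρ · F_W[ρ, χ'] for every partition χ' of W. Then for every partition χ of Fin n, F_n[π, χ] = Σ_{ρ∈R} a_ρ · F_n[ρ ∪ π_{W^c}, χ], where ρ ∪ π_{W^c} denotes the partition of Fin n whose blocks are the blocks of ρ together with the blocks of π_{W^c}. -/
/-!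
Write `d(π, ρ) = m + |π ⊔ ρ| - |π| - |ρ|`. It is nonnegative (the rank `m - |π|` of the
partition lattice is subadditive: split off one pair at a time), and compatibility means
`d = 0`. As `W` is a union of blocks of `π`, `π = π_W ∪ π_{Wᶜ}`. Let `ψ = (⊥_W ∪ π_{Wᶜ}) ⊔ χ`
and let `θ` be its trace on `W`. For a partition `σ` of `W`, the blocks of `(σ ∪ ⊥_{Wᶜ}) ⊔ ψ`
are the blocks of `σ ⊔ θ` together with the blocks of `ψ` missing `W`, whence
`d(σ ∪ π_{Wᶜ}, χ) = d(⊥_W ∪ π_{Wᶜ}, χ) + d_W(σ, θ)`. So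
`F_n[σ ∪ π_{Wᶜ}, χ] = F_n[⊥_W ∪ π_{Wᶜ}, χ] · F_W[σ, θ]`, where the first factor does not depend
on `σ`, and the hypothesis at `χ' = θ` gives the claim.
-/
noncomputable section

/-- The number of blocks of a partition of `β`, represented as a setoid. -/
def nBlocks {β : Type*} (s : Setoid β) : ℕ := Nat.card (Quotient s)

/-- Two partitions of a finite set are compatible if `|π| + |ρ| = m + |π ⊔ ρ|`,
where `m` is the size of the ground set. -/
def Compatible {β : Type*} (s t : Setoid β) : Prop :=
  nBlocks s + nBlocks t = Nat.card β + nBlocks (s ⊔ t)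

open scoped Classical in
/-- The forest compatibility matrix `F_β`. -/
def FMat (β : Type*) : Matrix (Setoid β) (Setoid β) ℚ := fun s t =>
  if Compatible s t then 1 else 0

/-- The disjoint union of two partitions: the partition of `β ⊕ γ` whose blocks
are the blocks of `s` together with the blocks of `t`. -/
def sumSetoid {β γ : Type*} (s : Setoid β) (t : Setoid γ) : Setoid (β ⊕ γ) where
  r x y :=
    match x, y with
    | .inl a, .inl b => s a b
    | .inr a, .inr b => t a b
    | _, _ => False
  iseqv := by
    constructor
    · rintro (a | a)
      · exact s.refl a
      · exact t.refl a
    · rintro (a | a) (b | b) h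
      · exact s.symm h
      · exact h.elim
      · exact h.elim
      · exact t.symm h
    · rintro (a | a) (b | b) (c | c) h1 h2 <;>
        first
          | exact s.trans h1 h2
          | exact t.trans h1 h2
          | exact False.elim h1
          | exact False.elim h2

/-- Given a partition `ρ` of `W ⊆ α` and a partition `σ` of `Wᶜ`, the partition
of `α` whose blocks are the blocks of `ρ` together with the blocks of `σ`. -/
noncomputable def combine {α : Type*} (W : Set α) (ρ : Setoid ↥W)
    (σ : Setoid ↥(Wᶜ : Set α)) : Setoid α := by
  classical
  exact Setoid.comap (Equiv.Set.sumCompl W).symm (sumSetoid ρ σ)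

section Subadditivity

variable {α : Type*}

def pairSetoid (a b : α) : Setoid α :=
  Relation.EqvGen.setoid fun x y => x = a ∧ y = b

lemma pairSetoid_le_iff {a b : α} {r : Setoid α} : pairSetoid a b ≤ r ↔ r a b :=
  ⟨fun h => h (Relation.EqvGen.rel _ _ ⟨rfl, rfl⟩),
    fun h => Setoid.eqvGen_le (by rintro _ _ ⟨rfl, rfl⟩; exact h)⟩

lemma nBlocks_antitone [Finite α] : Antitone (nBlocks : Setoid α → ℕ) := fun _ _ h =>
  Nat.card_le_card_of_surjective (Quotient.map id h)
    (Quotient.map_surjective h Function.surjective_id)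

lemma nBlocks_le_card [Finite α] (t : Setoid α) : nBlocks t ≤ Nat.card α :=
  Nat.card_le_card_of_surjective _ Quotient.mk_surjective

lemma nBlocks_ker_of_surjective {β : Type*} {f : α → β} (hf : f.Surjective) :
    nBlocks (Setoid.ker f) = Nat.card β :=
  Nat.card_congr (Setoid.quotientKerEquivOfSurjective f hf)

lemma nBlocks_bot : nBlocks (⊥ : Setoid α) = Nat.card α := by
  rw [← Setoid.ker_eq_bot_iff.2 Function.injective_id,
    nBlocks_ker_of_surjective Function.surjective_id]

lemma nBlocks_le_nBlocks_sup_pairSetoid_add_one [Finite α] (s : Setoid α) (a b : α) :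
    nBlocks s ≤ nBlocks (s ⊔ pairSetoid a b) + 1 := by
  classical
  let g : α → Quotient s := fun x => if s x b then ⟦a⟧ else ⟦x⟧
  have hle : s ⊔ pairSetoid a b ≤ Setoid.ker g := by
    refine sup_le (fun x y hxy => ?_) (pairSetoid_le_iff.2 (by simp [Setoid.ker_def, g]))
    have hb : s x b ↔ s y b := ⟨s.trans (s.symm hxy), s.trans hxy⟩
    simp only [Setoid.ker_def, g, hb, Quotient.sound hxy]
  have hcover : Set.range g ∪ {⟦b⟧} = Set.univ := by
    refine Set.eq_univ_of_forall fun c => Quotient.inductionOn c fun x => ?_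
    by_cases hx : s x b
    · exact Or.inr (Quotient.sound hx)
    · exact Or.inl ⟨x, if_neg hx⟩
  calc nBlocks s = (Set.univ : Set (Quotient s)).ncard := (Set.ncard_univ _).symm
    _ ≤ (Set.range g).ncard + 1 := by
        rw [← hcover]; exact (Set.ncard_union_le _ _).trans (by rw [Set.ncard_singleton])
    _ = nBlocks (Setoid.ker g) + 1 := by
        rw [nBlocks, Nat.card_congr (Setoid.quotientKerEquivRange g), Nat.card_coe_set_eq]
    _ ≤ nBlocks (s ⊔ pairSetoid a b) + 1 := by gcongr; exact nBlocks_antitone hle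

lemma exists_nBlocks_eq_add_one_le_sup_pairSetoid [Finite α] {t : Setoid α} {a b : α}
    (hab : t a b) (hne : a ≠ b) :
    ∃ t' : Setoid α, nBlocks t' = nBlocks t + 1 ∧ t ≤ t' ⊔ pairSetoid a b := by
  classical
  let f : α → Option (Quotient t) := fun x => if x = a then none else some ⟦x⟧
  have hf : f.Surjective := by
    rintro (_ | c)
    · exact ⟨a, if_pos rfl⟩
    · induction c using Quotient.inductionOn with | h x => ?_
      by_cases hx : x = a
      · subst hx; exact ⟨b, by simp [f, hne.symm, Quotient.sound (t.symm hab)]⟩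
      · exact ⟨x, if_neg hx⟩
  refine ⟨Setoid.ker f, by rw [nBlocks_ker_of_surjective hf, Finite.card_option]; rfl, ?_⟩
  set r := Setoid.ker f ⊔ pairSetoid a b
  have hr : ∀ {x y}, x ≠ a → y ≠ a → t x y → r x y := fun hx hy hxy =>
    (le_sup_left : Setoid.ker f ≤ r) (by simp [Setoid.ker_def, f, hx, hy, Quotient.sound hxy])
  have hab' : r a b := pairSetoid_le_iff.1 le_sup_right
  intro x y hxy
  by_cases hx : x = a <;> by_cases hy : y = a
  · rw [hx, hy]
  · subst hx; exact r.trans hab' (hr hne.symm hy (t.trans (t.symm hab) hxy))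
  · subst hy; exact r.trans (hr hx hne.symm (t.trans hxy hab)) (r.symm hab')
  · exact hr hx hy hxy

theorem nBlocks_add_nBlocks_le [Finite α] (s t : Setoid α) :
    nBlocks s + nBlocks t ≤ Nat.card α + nBlocks (s ⊔ t) := by
  by_cases hts : t ≤ s
  · rw [sup_eq_left.2 hts]; linarith [nBlocks_le_card t]
  · obtain ⟨a, b, hab, hs⟩ : ∃ a b, t a b ∧ ¬ s a b := by
      simpa [Setoid.le_def] using hts
    have hne : a ≠ b := fun h => hs (h ▸ s.refl a)
    obtain ⟨t', ht', hle⟩ := exists_nBlocks_eq_add_one_le_sup_pairSetoid hab hne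
    have hrec := nBlocks_add_nBlocks_le (s ⊔ pairSetoid a b) t'
    have hmerge := nBlocks_le_nBlocks_sup_pairSetoid_add_one s a b
    have hcoarse : nBlocks (s ⊔ pairSetoid a b ⊔ t') ≤ nBlocks (s ⊔ t) := by
      refine nBlocks_antitone (sup_le (le_sup_left.trans le_sup_left) (hle.trans ?_))
      exact sup_le le_sup_right (le_sup_right.trans le_sup_left)
    omega
termination_by Nat.card α - nBlocks t
decreasing_by have := nBlocks_le_card t'; omega

end Subadditivity

section Combine

variable {α β γ : Type*}

lemma sumSetoid_eq_ker (s : Setoid β) (t : Setoid γ) :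
    sumSetoid s t = Setoid.ker (Sum.map (Quotient.mk s) (Quotient.mk t)) := by
  ext (x | x) (y | y) <;>
    simp only [Setoid.ker_def, Sum.map_inl, Sum.map_inr, Sum.inl.injEq, Sum.inr.injEq, reduceCtorEq,
      Quotient.eq] <;> exact ⟨id, id⟩

lemma nBlocks_sumSetoid [Finite β] [Finite γ] (s : Setoid β) (t : Setoid γ) :
    nBlocks (sumSetoid s t) = nBlocks s + nBlocks t := by
  rw [sumSetoid_eq_ker, nBlocks_ker_of_surjective
    (Sum.map_surjective.2 ⟨Quotient.mk_surjective, Quotient.mk_surjective⟩), Nat.card_sum]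
  rfl

lemma nBlocks_comap_equiv (e : β ≃ γ) (r : Setoid γ) :
    nBlocks (Setoid.comap e r) = nBlocks r :=
  Nat.card_congr (Quotient.congr e fun _ _ => Iff.rfl)

lemma nBlocks_combine [Finite α] (W : Set α) (ρ : Setoid W) (σ : Setoid ↥(Wᶜ : Set α)) :
    nBlocks (combine W ρ σ) = nBlocks ρ + nBlocks σ := by
  rw [combine, nBlocks_comap_equiv, nBlocks_sumSetoid]

variable {W : Set α} {ρ : Setoid W} {σ : Setoid ↥(Wᶜ : Set α)} {x y : α}

lemma combine_rel_of_mem (hx : x ∈ W) (hy : y ∈ W) :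
    combine W ρ σ x y ↔ ρ ⟨x, hx⟩ ⟨y, hy⟩ := by
  classical
  rw [combine, Setoid.comap_rel, Equiv.Set.sumCompl_symm_apply_of_mem hx,
    Equiv.Set.sumCompl_symm_apply_of_mem hy]
  rfl

lemma combine_rel_of_notMem (hx : x ∉ W) (hy : y ∉ W) :
    combine W ρ σ x y ↔ σ ⟨x, hx⟩ ⟨y, hy⟩ := by
  classical
  rw [combine, Setoid.comap_rel, Equiv.Set.sumCompl_symm_apply_of_notMem hx,
    Equiv.Set.sumCompl_symm_apply_of_notMem hy]
  rfl

lemma mem_iff_mem_of_combine_rel (h : combine W ρ σ x y) : x ∈ W ↔ y ∈ W := by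
  classical
  by_cases hx : x ∈ W <;> by_cases hy : y ∈ W <;> simp only [hx, hy]
  · rw [combine, Setoid.comap_rel, Equiv.Set.sumCompl_symm_apply_of_mem hx,
      Equiv.Set.sumCompl_symm_apply_of_notMem hy] at h
    exact h.elim
  · rw [combine, Setoid.comap_rel, Equiv.Set.sumCompl_symm_apply_of_notMem hx,
      Equiv.Set.sumCompl_symm_apply_of_mem hy] at h
    exact h.elim

lemma combine_mono {ρ' : Setoid W} {σ' : Setoid ↥(Wᶜ : Set α)} (hρ : ρ ≤ ρ')
    (hσ : σ ≤ σ') : combine W ρ σ ≤ combine W ρ' σ' := by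
  intro x y h
  by_cases hx : x ∈ W
  · have hy := (mem_iff_mem_of_combine_rel h).1 hx
    exact (combine_rel_of_mem hx hy).2 (hρ ((combine_rel_of_mem hx hy).1 h))
  · have hy : y ∉ W := mt (mem_iff_mem_of_combine_rel h).2 hx
    exact (combine_rel_of_notMem hx hy).2 (hσ ((combine_rel_of_notMem hx hy).1 h))

lemma combine_bot_bot : combine W (⊥ : Setoid W) ⊥ = ⊥ := by
  refine le_bot_iff.1 fun x y h => ?_
  by_cases hx : x ∈ W
  · have hy := (mem_iff_mem_of_combine_rel h).1 hx
    exact congrArg Subtype.val ((combine_rel_of_mem hx hy).1 h :)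
  · have hy : y ∉ W := mt (mem_iff_mem_of_combine_rel h).2 hx
    exact congrArg Subtype.val ((combine_rel_of_notMem hx hy).1 h :)

lemma combine_eq_sup (ρ : Setoid W) (σ : Setoid ↥(Wᶜ : Set α)) :
    combine W ρ σ = combine W ρ ⊥ ⊔ combine W ⊥ σ := by
  refine le_antisymm (fun x y h => ?_)
    (sup_le (combine_mono le_rfl bot_le) (combine_mono bot_le le_rfl))
  by_cases hx : x ∈ W
  · have hy := (mem_iff_mem_of_combine_rel h).1 hx
    exact le_sup_left (a := combine W ρ ⊥)
      ((combine_rel_of_mem hx hy).2 ((combine_rel_of_mem hx hy).1 h))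
  · have hy : y ∉ W := mt (mem_iff_mem_of_combine_rel h).2 hx
    exact le_sup_right (a := combine W ρ ⊥)
      ((combine_rel_of_notMem hx hy).2 ((combine_rel_of_notMem hx hy).1 h))

lemma combine_comap_val_eq_self {π : Setoid α} (hW : ∀ x ∈ W, ∀ y, π x y → y ∈ W) :
    combine W (Setoid.comap Subtype.val π) (Setoid.comap Subtype.val π) = π := by
  ext x y
  by_cases hx : x ∈ W <;> by_cases hy : y ∈ W
  · exact combine_rel_of_mem hx hy
  · exact iff_of_false (fun h => hy ((mem_iff_mem_of_combine_rel h).1 hx))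
      (fun h => hy (hW x hx y h))
  · exact iff_of_false (fun h => hx ((mem_iff_mem_of_combine_rel h).2 hy))
      (fun h => hx (hW y hy x (π.symm h)))
  · exact combine_rel_of_notMem hx hy

end Combine

section Restriction

variable {α : Type*} (W : Set α) (ψ : Setoid α)

def blocksAvoiding : Set (Quotient ψ) := (Set.range fun w : W => (⟦w⟧ : Quotient ψ))ᶜ

variable {W ψ}

lemma mk_mem_blocksAvoiding {x : α} (hx : ¬∃ w : W, ψ x w) : ⟦x⟧ ∈ blocksAvoiding W ψ :=
  fun ⟨w, hw⟩ => hx ⟨w, ψ.symm (Quotient.exact hw)⟩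

variable (W ψ)

open Classical in
def joinLabel (σ : Setoid W) (x : α) :
    Quotient (σ ⊔ ψ.comap Subtype.val) ⊕ blocksAvoiding W ψ :=
  if h : ∃ w : W, ψ x w then .inl ⟦h.choose⟧ else .inr ⟨⟦x⟧, mk_mem_blocksAvoiding h⟩

variable {W ψ} {σ : Setoid W}

lemma joinLabel_of_rel {x : α} {w : W} (h : ψ x w) : joinLabel W ψ σ x = .inl ⟦w⟧ := by
  have hex : ∃ w : W, ψ x w := ⟨w, h⟩
  rw [joinLabel, dif_pos hex]
  exact congrArg Sum.inl
    (Quotient.sound (le_sup_right (a := σ) (ψ.trans (ψ.symm hex.choose_spec) h)))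

lemma joinLabel_of_not_exists {x : α} (h : ¬∃ w : W, ψ x w) :
    joinLabel W ψ σ x = .inr ⟨⟦x⟧, mk_mem_blocksAvoiding h⟩ :=
  dif_neg h

lemma joinLabel_surjective : (joinLabel W ψ σ).Surjective := by
  rintro (c | ⟨c, hc⟩)
  · obtain ⟨w, rfl⟩ := Quotient.mk_surjective c
    exact ⟨w, joinLabel_of_rel (ψ.refl _)⟩
  · obtain ⟨x, rfl⟩ := Quotient.mk_surjective c
    exact ⟨x, joinLabel_of_not_exists fun ⟨w, hw⟩ => hc ⟨w, Quotient.sound (ψ.symm hw)⟩⟩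

lemma combine_bot_sup_le_ker_joinLabel : combine W σ ⊥ ⊔ ψ ≤ Setoid.ker (joinLabel W ψ σ) := by
  refine sup_le (fun x y h => ?_) (fun x y h => ?_) <;> rw [Setoid.ker_def]
  · by_cases hx : x ∈ W
    · have hy := (mem_iff_mem_of_combine_rel h).1 hx
      rw [joinLabel_of_rel (w := ⟨x, hx⟩) (ψ.refl x), joinLabel_of_rel (w := ⟨y, hy⟩) (ψ.refl y)]
      exact congrArg Sum.inl
        (Quotient.sound ((le_sup_left : σ ≤ σ ⊔ _) ((combine_rel_of_mem hx hy).1 h)))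
    · have hy : y ∉ W := mt (mem_iff_mem_of_combine_rel h).2 hx
      rw [show x = y from congrArg Subtype.val ((combine_rel_of_notMem hx hy).1 h :)]
  · by_cases hx : ∃ w : W, ψ x w
    · obtain ⟨w, hw⟩ := hx
      rw [joinLabel_of_rel hw, joinLabel_of_rel (ψ.trans (ψ.symm h) hw)]
    · have hy : ¬∃ w : W, ψ y w := fun ⟨w, hw⟩ => hx ⟨w, ψ.trans h hw⟩
      rw [joinLabel_of_not_exists hx, joinLabel_of_not_exists hy]
      exact congrArg Sum.inr (Subtype.ext (Quotient.sound h))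

lemma ker_joinLabel_le_combine_bot_sup : Setoid.ker (joinLabel W ψ σ) ≤ combine W σ ⊥ ⊔ ψ := by
  set M := combine W σ ⊥ ⊔ ψ
  have hψM : ψ ≤ M := le_sup_right
  have hWM : σ ⊔ ψ.comap Subtype.val ≤ M.comap Subtype.val :=
    sup_le (fun u v h => le_sup_left (b := ψ) ((combine_rel_of_mem u.2 v.2).2 h)) fun _ _ h => hψM h
  intro x y h
  rw [Setoid.ker_def] at h
  by_cases hx : ∃ w : W, ψ x w <;> by_cases hy : ∃ w : W, ψ y w
  · obtain ⟨u, hu⟩ := hx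
    obtain ⟨v, hv⟩ := hy
    rw [joinLabel_of_rel hu, joinLabel_of_rel hv] at h
    exact M.trans (hψM hu) (M.trans (hWM (Quotient.exact (Sum.inl_injective h))) (hψM (ψ.symm hv)))
  · obtain ⟨u, hu⟩ := hx
    rw [joinLabel_of_rel hu, joinLabel_of_not_exists hy] at h
    exact (Sum.inl_ne_inr h).elim
  · obtain ⟨v, hv⟩ := hy
    rw [joinLabel_of_not_exists hx, joinLabel_of_rel hv] at h
    exact (Sum.inr_ne_inl h).elim
  · rw [joinLabel_of_not_exists hx, joinLabel_of_not_exists hy] at h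
    exact hψM (Quotient.exact (congrArg Subtype.val (Sum.inr_injective h)))

variable [Finite α]

lemma nBlocks_combine_bot_sup (σ : Setoid W) :
    nBlocks (combine W σ ⊥ ⊔ ψ) =
      nBlocks (σ ⊔ ψ.comap Subtype.val) + Nat.card (blocksAvoiding W ψ) := by
  rw [le_antisymm combine_bot_sup_le_ker_joinLabel ker_joinLabel_le_combine_bot_sup,
    nBlocks_ker_of_surjective joinLabel_surjective, Nat.card_sum]
  rfl

theorem nBlocks_combine_bot_sup_add (σ : Setoid W) :
    nBlocks (combine W σ ⊥ ⊔ ψ) + nBlocks (ψ.comap Subtype.val : Setoid W) =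
      nBlocks (σ ⊔ ψ.comap Subtype.val) + nBlocks ψ := by
  have hσ := nBlocks_combine_bot_sup (ψ := ψ) σ
  have hbot := nBlocks_combine_bot_sup (ψ := ψ) (⊥ : Setoid W)
  rw [combine_bot_bot, bot_sup_eq, bot_sup_eq] at hbot
  omega

end Restriction

section Compatibility

variable {α : Type*} [Finite α] {W : Set α}

theorem compatible_combine_iff (σ : Setoid W) (τ : Setoid ↥(Wᶜ : Set α)) (χ : Setoid α) :
    Compatible (combine W σ τ) χ ↔
      Compatible (combine W ⊥ τ) χ ∧
        Compatible σ ((combine W ⊥ τ ⊔ χ).comap Subtype.val : Setoid W) := by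
  classical
  have hjoin : combine W σ τ ⊔ χ = combine W σ ⊥ ⊔ (combine W ⊥ τ ⊔ χ) := by
    rw [combine_eq_sup σ τ, sup_assoc]
  have hcount := nBlocks_combine_bot_sup_add (ψ := combine W ⊥ τ ⊔ χ) σ
  have hψ := nBlocks_add_nBlocks_le (combine W ⊥ τ) χ
  have hσ := nBlocks_add_nBlocks_le σ ((combine W ⊥ τ ⊔ χ).comap Subtype.val : Setoid W)
  have hcard : Nat.card W + Nat.card ↥(Wᶜ : Set α) = Nat.card α := by
    rw [← Nat.card_sum]; exact Nat.card_congr (Equiv.Set.sumCompl W)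
  have hστ := nBlocks_combine W σ τ
  have hτ := nBlocks_combine W ⊥ τ
  rw [nBlocks_bot] at hτ
  unfold Compatible
  rw [hjoin]
  omega

lemma FMat_combine (σ : Setoid W) (τ : Setoid ↥(Wᶜ : Set α)) (χ : Setoid α) :
    FMat α (combine W σ τ) χ =
      FMat α (combine W ⊥ τ) χ * FMat W σ ((combine W ⊥ τ ⊔ χ).comap Subtype.val) := by
  classical
  unfold FMat
  rw [ite_zero_mul_ite_zero, mul_one]
  exact if_congr (compatible_combine_iff σ τ χ) rfl rfl

end Compatibility

/-- Projection lemma: let `π` be a partition of `Fin n` and `W` a union of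
blocks of `π`; the restriction `π_W` of `π` to `W` and `π_{Wᶜ}` to `Wᶜ` are
given by `Setoid.comap Subtype.val π`.  If the row `F_W[π_W]` decomposes as
`Σ_{ρ ∈ R} a_ρ · F_W[ρ]`, then for every partition `χ` of `Fin n`,
`F_n[π, χ] = Σ_{ρ ∈ R} a_ρ · F_n[ρ ∪ π_{Wᶜ}, χ]`. -/
theorem partProj (n : ℕ) (π : Setoid (Fin n)) (W : Set (Fin n))
    (hW : ∀ x ∈ W, ∀ y, π x y → y ∈ W)
    (R : Finset (Setoid ↥W)) (a : Setoid ↥W → ℚ)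
    (h : ∀ χ' : Setoid ↥W,
      FMat ↥W (Setoid.comap Subtype.val π) χ' = ∑ ρ ∈ R, a ρ * FMat ↥W ρ χ') :
    ∀ χ : Setoid (Fin n),
      FMat (Fin n) π χ =
        ∑ ρ ∈ R, a ρ *
          FMat (Fin n)
            (combine W ρ (Setoid.comap Subtype.val π : Setoid ↥(Wᶜ : Set (Fin n)))) χ := by
  intro χ
  calc FMat (Fin n) π χ
      = FMat (Fin n) (combine W (π.comap Subtype.val) (π.comap Subtype.val)) χ := by
        rw [combine_comap_val_eq_self hW]
    _ = _ := by
        rw [FMat_combine, h, Finset.mul_sum]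
        exact Finset.sum_congr rfl fun ρ _ => by rw [FMat_combine ρ, mul_left_comm]
end
end
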